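/- For every σ > 0 and every integer r ≥ 1, ∫₀^∞ x^r · f_IG(x|σ,σ) dx = ∫_ℝ θ_r(φ_σ⁻¹(z)) · φ(z) dz, where θ_r(x) = (x^r + x^{1−r})/(1+x) and φ(z) = exp(−z²/2)/√(2π). -/

import Mathlib

open MeasureTheory Real Set

/-- Inverse Gaussian density `f_IG(x | γ, δ)`. -/
noncomputable def fIG (γ δ x : ℝ) : ℝ :=
  δ / Real.sqrt (2 * Real.pi * x ^ 3) * Real.exp (-(γ * x - δ) ^ 2 / (2 * x))

/-- The map `φ_σ(x) = σ (√x − 1/√x)`. -/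
noncomputable def phiMap (σ x : ℝ) : ℝ := σ * (Real.sqrt x - 1 / Real.sqrt x)

/-- The inverse map `φ_σ⁻¹(z) = 1 + z²/(2σ²) + (z/σ)√(1 + z²/(4σ²))`. -/
noncomputable def phiInv (σ z : ℝ) : ℝ :=
  1 + z ^ 2 / (2 * σ ^ 2) + z / σ * Real.sqrt (1 + z ^ 2 / (4 * σ ^ 2))

/-- Standard normal density `φ(z) = exp(−z²/2)/√(2π)`. -/
noncomputable def stdNormalPdf (z : ℝ) : ℝ := Real.exp (-z ^ 2 / 2) / Real.sqrt (2 * Real.pi)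

/-- Standard normal cumulative distribution function. -/
noncomputable def stdNormalCDF (z : ℝ) : ℝ := ∫ t in Set.Iic z, stdNormalPdf t

/-- Modified Bessel function of the second kind `K_p(z)` (integral representation). -/
noncomputable def besselK (p z : ℝ) : ℝ :=
  (1 / 2) * ∫ t in Set.Ioi (0 : ℝ), t ^ (p - 1) * Real.exp (-z * (t + 1 / t) / 2)

/-- Generalized inverse Gaussian density `f_GIG(x | γ, δ, p)`. -/
noncomputable def fGIG (γ δ p x : ℝ) : ℝ :=
  (γ / δ) ^ p * x ^ (p - 1) / (2 * besselK p (γ * δ)) *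
    Real.exp (-(γ ^ 2 * x + δ ^ 2 / x) / 2)

/-- Generalized hyperbolic density `f_GH(y | μ, β, γ, δ, p)` with `α = √(β² + γ²)`. -/
noncomputable def fGH (μ β γ δ p y : ℝ) : ℝ :=
  Real.sqrt (Real.sqrt (β ^ 2 + γ ^ 2)) *
      (γ / (Real.sqrt (β ^ 2 + γ ^ 2) * δ)) ^ p /
      (Real.sqrt (2 * Real.pi) * besselK p (δ * γ)) *
    Real.exp (β * (y - μ)) *
    besselK (p - 1 / 2) (Real.sqrt (β ^ 2 + γ ^ 2) * Real.sqrt (δ ^ 2 + (y - μ) ^ 2)) /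
    (δ ^ 2 + (y - μ) ^ 2) ^ ((1 - 2 * p) / 4)

/-! Substituting `z = φ_σ(x)` on the right uses `|φ_σ'(x)| φ(φ_σ(x)) = (1 + x)/2 · f_IG(x|σ,σ)`,
so the right-hand side is the average of the moments of orders `r` and `1 - r` of `f_IG(·|σ,σ)`.
These two moments agree because `f_IG(1/x|σ,σ) = x³ f_IG(x|σ,σ)`, i.e. the substitution
`x ↦ 1/x` exchanges them. -/

lemma add_sqrt_one_add_sq_pos (a : ℝ) : 0 < a + √(1 + a ^ 2) := by
  have : |a| < √(1 + a ^ 2) := by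
    rw [← sqrt_sq_eq_abs]
    exact sqrt_lt_sqrt (sq_nonneg a) (by linarith)
  linarith [neg_abs_le a]

lemma inv_add_sqrt_one_add_sq (a : ℝ) : (a + √(1 + a ^ 2))⁻¹ = √(1 + a ^ 2) - a := by
  refine inv_eq_of_mul_eq_one_right ?_
  linear_combination sq_sqrt (by positivity : (0 : ℝ) ≤ 1 + a ^ 2)

lemma phiMap_sq (σ : ℝ) {s : ℝ} (hs : 0 < s) : phiMap σ (s ^ 2) = σ * (s - s⁻¹) := by
  simp [phiMap, sqrt_sq hs.le]

lemma phiInv_eq_sq {σ : ℝ} (hσ : σ ≠ 0) (z : ℝ) :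
    phiInv σ z = (z / (2 * σ) + √(1 + (z / (2 * σ)) ^ 2)) ^ 2 := by
  have hz : (z / (2 * σ)) ^ 2 = z ^ 2 / (4 * σ ^ 2) := by ring
  rw [hz, phiInv]
  linear_combination -sq_sqrt (by positivity : (0 : ℝ) ≤ 1 + z ^ 2 / (4 * σ ^ 2))

lemma phiInv_pos {σ : ℝ} (hσ : σ ≠ 0) (z : ℝ) : 0 < phiInv σ z := by
  rw [phiInv_eq_sq hσ]
  exact pow_pos (add_sqrt_one_add_sq_pos _) 2

lemma phiMap_phiInv {σ : ℝ} (hσ : σ ≠ 0) (z : ℝ) : phiMap σ (phiInv σ z) = z := by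
  rw [phiInv_eq_sq hσ, phiMap_sq σ (add_sqrt_one_add_sq_pos _), inv_add_sqrt_one_add_sq]
  field_simp
  ring

lemma phiInv_phiMap {σ x : ℝ} (hσ : σ ≠ 0) (hx : 0 < x) : phiInv σ (phiMap σ x) = x := by
  obtain ⟨s, hs, rfl⟩ : ∃ s, 0 < s ∧ x = s ^ 2 := ⟨√x, sqrt_pos.2 hx, (sq_sqrt hx.le).symm⟩
  have hcosh : 1 + ((s - s⁻¹) / 2) ^ 2 = ((s + s⁻¹) / 2) ^ 2 := by
    field_simp
    ring
  have hz : σ * (s - s⁻¹) / (2 * σ) = (s - s⁻¹) / 2 := by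
    field_simp
  rw [phiMap_sq σ hs, phiInv_eq_sq hσ, hz, hcosh, sqrt_sq (by positivity)]
  ring

lemma hasDerivAt_phiMap (σ : ℝ) {x : ℝ} (hx : 0 < x) :
    HasDerivAt (phiMap σ) (σ * (x + 1) / (2 * x * √x)) x := by
  have hs : √x ≠ 0 := (sqrt_pos.2 hx).ne'
  have hsqrt := hasDerivAt_sqrt hx.ne'
  have hfun : phiMap σ = fun y => σ * (√y - (√y)⁻¹) := funext fun y => by simp [phiMap]
  rw [hfun]
  refine ((hsqrt.sub (hsqrt.inv hs)).const_mul σ).congr_deriv ?_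
  field_simp
  rw [sq_sqrt hx.le]
  ring

lemma sqrt_two_pi_mul_pow_three {x : ℝ} (hx : 0 ≤ x) :
    √(2 * π * x ^ 3) = √(2 * π) * (x * √x) := by
  rw [sqrt_mul (by positivity : (0 : ℝ) ≤ 2 * π), pow_succ, sqrt_mul (sq_nonneg x), sqrt_sq hx]

lemma stdNormalPdf_phiMap (σ : ℝ) {x : ℝ} (hx : 0 < x) :
    stdNormalPdf (phiMap σ x) = exp (-(σ * x - σ) ^ 2 / (2 * x)) / √(2 * π) := by
  obtain ⟨s, hs, rfl⟩ : ∃ s, 0 < s ∧ x = s ^ 2 := ⟨√x, sqrt_pos.2 hx, (sq_sqrt hx.le).symm⟩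
  rw [stdNormalPdf, phiMap_sq σ hs]
  congr 2
  field_simp

lemma deriv_phiMap_mul_stdNormalPdf (σ : ℝ) {x : ℝ} (hx : 0 < x) :
    σ * (x + 1) / (2 * x * √x) * stdNormalPdf (phiMap σ x) = (1 + x) / 2 * fIG σ σ x := by
  have hs : √x ≠ 0 := (sqrt_pos.2 hx).ne'
  have hπ : √(2 * π) ≠ 0 := by positivity
  rw [stdNormalPdf_phiMap σ hx, fIG, sqrt_two_pi_mul_pow_three hx.le]
  field_simp
  ring

theorem integral_comp_phiInv_mul_stdNormalPdf {σ : ℝ} (hσ : 0 < σ) (F : ℝ → ℝ) :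
    ∫ z, F (phiInv σ z) * stdNormalPdf z = ∫ x in Ioi 0, F x * ((1 + x) / 2 * fIG σ σ x) := by
  have himage : phiMap σ '' Ioi 0 = univ :=
    eq_univ_of_forall fun z => ⟨phiInv σ z, phiInv_pos hσ.ne' z, phiMap_phiInv hσ.ne' z⟩
  have hinj : InjOn (phiMap σ) (Ioi 0) := fun x hx y hy hxy => by
    rw [← phiInv_phiMap hσ.ne' hx, hxy, phiInv_phiMap hσ.ne' hy]
  have hderiv : ∀ x ∈ Ioi (0 : ℝ),
      HasDerivWithinAt (phiMap σ) (σ * (x + 1) / (2 * x * √x)) (Ioi 0) x :=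
    fun x hx => (hasDerivAt_phiMap σ hx).hasDerivWithinAt
  rw [← setIntegral_univ, ← himage,
    integral_image_eq_integral_abs_deriv_smul measurableSet_Ioi hderiv hinj]
  refine setIntegral_congr_fun measurableSet_Ioi fun x (hx : 0 < x) => ?_
  rw [smul_eq_mul, abs_of_pos (by positivity), phiInv_phiMap hσ.ne' hx, mul_left_comm,
    deriv_phiMap_mul_stdNormalPdf σ hx]

section Inversion

variable {E : Type*} [NormedAddCommGroup E] [NormedSpace ℝ E]

lemma hasDerivWithinAt_inv_Ioi {x : ℝ} (hx : x ∈ Ioi 0) :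
    HasDerivWithinAt (·⁻¹) (-(x ^ 2)⁻¹) (Ioi 0) x :=
  (hasDerivAt_inv (ne_of_gt hx)).hasDerivWithinAt

lemma image_inv_Ioi_zero : (·⁻¹) '' Ioi (0 : ℝ) = Ioi 0 := by
  ext
  simp

theorem integral_Ioi_comp_inv (g : ℝ → E) :
    ∫ x in Ioi 0, (x ^ 2)⁻¹ • g x⁻¹ = ∫ x in Ioi 0, g x := by
  have h := integral_image_eq_integral_abs_deriv_smul measurableSet_Ioi
    (fun _ => hasDerivWithinAt_inv_Ioi) inv_injective.injOn g
  rw [image_inv_Ioi_zero] at h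
  simpa using h.symm

theorem integrableOn_Ioi_comp_inv_iff (g : ℝ → E) :
    IntegrableOn (fun x => (x ^ 2)⁻¹ • g x⁻¹) (Ioi 0) ↔ IntegrableOn g (Ioi 0) := by
  have h := integrableOn_image_iff_integrableOn_abs_deriv_smul measurableSet_Ioi
    (fun _ => hasDerivWithinAt_inv_Ioi) inv_injective.injOn g
  rw [image_inv_Ioi_zero] at h
  simpa using h.symm

end Inversion

lemma fIG_inv (σ : ℝ) {x : ℝ} (hx : 0 < x) : fIG σ σ x⁻¹ = x ^ 3 * fIG σ σ x := by
  obtain ⟨s, hs, rfl⟩ : ∃ s, 0 < s ∧ x = s ^ 2 := ⟨√x, sqrt_pos.2 hx, (sq_sqrt hx.le).symm⟩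
  have hπ : √(2 * π) ≠ 0 := by positivity
  rw [fIG, fIG, sqrt_two_pi_mul_pow_three (by positivity), sqrt_two_pi_mul_pow_three hx.le,
    sqrt_inv, sqrt_sq hs.le]
  have hexp : -(σ * (s ^ 2)⁻¹ - σ) ^ 2 / (2 * (s ^ 2)⁻¹) = -(σ * s ^ 2 - σ) ^ 2 / (2 * s ^ 2) := by
    field_simp
    ring
  rw [hexp]
  field_simp

lemma fIG_nonneg (γ : ℝ) {δ : ℝ} (hδ : 0 ≤ δ) (x : ℝ) : 0 ≤ fIG γ δ x := by
  unfold fIG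
  positivity

@[fun_prop]
lemma measurable_fIG (γ δ : ℝ) : Measurable (fIG γ δ) := by
  unfold fIG
  fun_prop

lemma inv_sq_smul_zpow_mul_fIG_inv (σ : ℝ) (k : ℤ) {x : ℝ} (hx : 0 < x) :
    (x ^ 2)⁻¹ • (x⁻¹ ^ (1 - k) * fIG σ σ x⁻¹) = x ^ k * fIG σ σ x := by
  rw [smul_eq_mul, fIG_inv σ hx, inv_zpow', neg_sub, zpow_sub_one₀ hx.ne']
  field_simp

theorem integral_zpow_one_sub_mul_fIG (σ : ℝ) (k : ℤ) :
    ∫ x in Ioi 0, x ^ (1 - k) * fIG σ σ x = ∫ x in Ioi 0, x ^ k * fIG σ σ x := by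
  rw [← integral_Ioi_comp_inv]
  exact setIntegral_congr_fun measurableSet_Ioi fun x hx => inv_sq_smul_zpow_mul_fIG_inv σ k hx

theorem integrableOn_zpow_one_sub_mul_fIG_iff (σ : ℝ) (k : ℤ) :
    IntegrableOn (fun x => x ^ (1 - k) * fIG σ σ x) (Ioi 0) ↔
      IntegrableOn (fun x => x ^ k * fIG σ σ x) (Ioi 0) := by
  rw [← integrableOn_Ioi_comp_inv_iff]
  exact integrableOn_congr_fun (fun x hx => inv_sq_smul_zpow_mul_fIG_inv σ k hx) measurableSet_Ioi

theorem integral_add_div_two_of_integral_eq {α : Type*} [MeasurableSpace α] {μ : Measure α}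
    {f g : α → ℝ} (hf : ∀ᵐ a ∂μ, 0 ≤ f a) (hg : ∀ᵐ a ∂μ, 0 ≤ g a) (hfm : AEStronglyMeasurable f μ)
    (hint : Integrable g μ ↔ Integrable f μ) (heq : ∫ a, g a ∂μ = ∫ a, f a ∂μ) :
    ∫ a, (f a + g a) / 2 ∂μ = ∫ a, f a ∂μ := by
  by_cases hfi : Integrable f μ
  · rw [integral_div, integral_add hfi (hint.2 hfi), heq]
    ring
  · -- both sides are then the junk value `0`
    have havg : ¬Integrable (fun a => (f a + g a) / 2) μ := fun h => hfi <| by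
      refine (h.const_mul 2).mono' hfm ?_
      filter_upwards [hf, hg] with a hfa hga
      rw [Real.norm_of_nonneg hfa]
      linarith
    rw [integral_undef havg, integral_undef hfi]

theorem ig_moment_as_gaussian_integral_general (σ : ℝ) (hσ : 0 < σ) (r : ℕ) :
    ∫ x in Set.Ioi (0 : ℝ), x ^ (r : ℤ) * fIG σ σ x =
      ∫ z, (phiInv σ z ^ (r : ℤ) + phiInv σ z ^ (1 - (r : ℤ))) / (1 + phiInv σ z) *
        stdNormalPdf z := by
  rw [integral_comp_phiInv_mul_stdNormalPdf hσ fun x => (x ^ (r : ℤ) + x ^ (1 - (r : ℤ))) / (1 + x)]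
  have hθ : EqOn (fun x => (x ^ (r : ℤ) + x ^ (1 - (r : ℤ))) / (1 + x) * ((1 + x) / 2 * fIG σ σ x))
      (fun x => (x ^ (r : ℤ) * fIG σ σ x + x ^ (1 - (r : ℤ)) * fIG σ σ x) / 2) (Ioi 0) :=
    fun x (hx : 0 < x) => by field_simp
  have hnonneg (k : ℤ) : ∀ᵐ x ∂volume.restrict (Ioi 0), 0 ≤ x ^ k * fIG σ σ x :=
    ae_restrict_of_forall_mem measurableSet_Ioi fun x (hx : 0 < x) =>
      mul_nonneg (zpow_nonneg hx.le k) (fIG_nonneg σ hσ.le x)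
  rw [setIntegral_congr_fun measurableSet_Ioi hθ]
  exact (integral_add_div_two_of_integral_eq (hnonneg _) (hnonneg _)
    (by fun_prop : Measurable _).aestronglyMeasurable
    (integrableOn_zpow_one_sub_mul_fIG_iff σ r) (integral_zpow_one_sub_mul_fIG σ r)).symm

/-- `∫₀^∞ x^r f_IG(x|σ,σ) dx = ∫_ℝ θ_r(φ_σ⁻¹(z)) φ(z) dz` where
`θ_r(x) = (x^r + x^{1−r})/(1+x)`. -/
theorem ig_moment_as_gaussian_integral (σ : ℝ) (hσ : 0 < σ) (r : ℕ) (hr : 1 ≤ r) :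
    ∫ x in Set.Ioi (0 : ℝ), x ^ (r : ℤ) * fIG σ σ x =
      ∫ z, (phiInv σ z ^ (r : ℤ) + phiInv σ z ^ (1 - (r : ℤ))) / (1 + phiInv σ z) *
        stdNormalPdf z :=
  ig_moment_as_gaussian_integral_general σ hσ r
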